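/- In ℤ[[x,t]], the generating series of Dyck-path prefixes satisfies the functional equation Q(x) = M(x)·(1 + x t Q(tx)), where Q(tx) denotes the image of Q(x) under the continuous ring endomorphism of ℤ[[x,t]] fixing t and sending x to tx. -/

import Mathlib

open CoxeterSystem

/-- A valid step of a Dyck-type walk between consecutive heights `a`, `b`:
an up step `(1,1)`, a down step `(1,-1)`, or a horizontal step `(1,0)`, the latter
being allowed only between points on the `x`-axis. -/
def IsWalkStep (a b : ℕ) : Prop := b = a + 1 ∨ a = b + 1 ∨ (a = 0 ∧ b = 0)

/-- A step which is an up step `(1,1)` or a down step `(1,-1)` (no horizontal step). -/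
def IsPMStep (a b : ℕ) : Prop := b = a + 1 ∨ a = b + 1

/-- A walk of length `n`, recorded by its sequence of heights `h 0, h 1, …, h n`
(the `i`-th point of the walk is `(i, h i)`). -/
def IsWalk (n : ℕ) (h : Fin (n + 1) → ℕ) : Prop :=
  ∀ i : Fin n, IsWalkStep (h i.castSucc) (h i.succ)

/-- A walk of length `n` with no horizontal step. -/
def IsPMWalk (n : ℕ) (h : Fin (n + 1) → ℕ) : Prop :=
  ∀ i : Fin n, IsPMStep (h i.castSucc) (h i.succ)

/-- Walks in `M*_n`: walks of length `n` from `(0,0)` to `(n,0)` (horizontal steps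
allowed at height `0`). -/
def IsMStarWalk (n : ℕ) (h : Fin (n + 1) → ℕ) : Prop :=
  IsWalk n h ∧ h 0 = 0 ∧ h (Fin.last n) = 0

/-- Walks in `M_n` (Dyck paths): walks of length `n` from `(0,0)` to `(n,0)` with no
horizontal step. -/
def IsMWalk (n : ℕ) (h : Fin (n + 1) → ℕ) : Prop :=
  IsPMWalk n h ∧ h 0 = 0 ∧ h (Fin.last n) = 0

/-- Walks in `Q_n` (prefixes of Dyck paths): walks of length `n` starting at `(0,0)`
with no horizontal step, ending at arbitrary height. -/
def IsQWalk (n : ℕ) (h : Fin (n + 1) → ℕ) : Prop :=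
  IsPMWalk n h ∧ h 0 = 0

/-- Walks in `Q^o_n`: prefixes of Dyck paths of length `n` ending at odd height. -/
def IsQoWalk (n : ℕ) (h : Fin (n + 1) → ℕ) : Prop :=
  IsQWalk n h ∧ Odd (h (Fin.last n))

/-- The total height of a walk: the sum of the heights of its points. -/
def totalHeight (n : ℕ) (h : Fin (n + 1) → ℕ) : ℕ := ∑ i, h i

/-- We represent the formal power series ring `ℤ[[x,t]]` as `(ℤ[[t]])[[x]]`,
i.e. `PowerSeries (PowerSeries ℤ)`: the outer variable is `x`, the inner one is `t`.
Given a family of walk predicates, `walkSeries P` is the generating series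
`Σ_{n ≥ 0} x^n Σ_{walks of length n} t^(total height)`: its coefficient of `x^n t^k`
is the number of walks of length `n` in the family with total height `k`. -/
noncomputable def walkSeries (P : (n : ℕ) → (Fin (n + 1) → ℕ) → Prop) :
    PowerSeries (PowerSeries ℤ) :=
  PowerSeries.mk fun n => PowerSeries.mk fun k =>
    (Nat.card {h : Fin (n + 1) → ℕ // P n h ∧ totalHeight n h = k} : ℤ)

/-- The series `M(x)`, counting Dyck paths by length (in `x`) and total height (in `t`). -/
noncomputable def Mser : PowerSeries (PowerSeries ℤ) := walkSeries IsMWalk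

/-- The series `M*(x)`, counting walks from `(0,0)` to `(n,0)` with horizontal steps
allowed at height `0`. -/
noncomputable def MstarSer : PowerSeries (PowerSeries ℤ) := walkSeries IsMStarWalk

/-- The series `Q(x)`, counting prefixes of Dyck paths. -/
noncomputable def Qser : PowerSeries (PowerSeries ℤ) := walkSeries IsQWalk

/-- The series `Q^o(x)`, counting prefixes of Dyck paths ending at odd height. -/
noncomputable def QoSer : PowerSeries (PowerSeries ℤ) := walkSeries IsQoWalk

/-- The variable `x` of `ℤ[[x,t]] = (ℤ[[t]])[[x]]`. -/
noncomputable def xVar : PowerSeries (PowerSeries ℤ) := PowerSeries.X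

/-- The variable `t` of `ℤ[[x,t]] = (ℤ[[t]])[[x]]` (a constant series in `x`). -/
noncomputable def tVar : PowerSeries (PowerSeries ℤ) :=
  PowerSeries.C (R := PowerSeries ℤ) PowerSeries.X

/-- The continuous ring endomorphism of `ℤ[[x,t]]` fixing `t` and sending `x` to `t^j · x`
(`j = 1` gives `F(x) ↦ F(tx)`, `j = 2` gives `F(x) ↦ F(t²x)`). -/
noncomputable def substTx (j : ℕ) :
    PowerSeries (PowerSeries ℤ) →+* PowerSeries (PowerSeries ℤ) :=
  PowerSeries.rescale ((PowerSeries.X : PowerSeries ℤ) ^ j)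

namespace QfeAux

open Finset

/-- `ℕ`-indexed version of a Dyck-path prefix of length `n` and total height `k`. -/
def NQ (n k : ℕ) (f : ℕ → ℕ) : Prop :=
  (∀ i < n, IsPMStep (f i) (f (i + 1))) ∧ f 0 = 0 ∧ (∀ i, n < i → f i = 0) ∧
    ∑ i ∈ range (n + 1), f i = k

/-- `ℕ`-indexed version of a Dyck path of length `n` and total height `k`. -/
def NM (n k : ℕ) (f : ℕ → ℕ) : Prop := NQ n k f ∧ f n = 0

noncomputable def qc (n k : ℕ) : ℕ := Nat.card {f : ℕ → ℕ // NQ n k f}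
noncomputable def mc (n k : ℕ) : ℕ := Nat.card {f : ℕ → ℕ // NM n k f}

lemma step_add_one {x y : ℕ} (h : IsPMStep x y) : IsPMStep (x + 1) (y + 1) := by
  unfold IsPMStep at *; omega

lemma step_sub_one {x y : ℕ} (hx : 0 < x) (hy : 0 < y) (h : IsPMStep x y) :
    IsPMStep (x - 1) (y - 1) := by
  unfold IsPMStep at *; omega

lemma step_from_zero {y : ℕ} (h : IsPMStep 0 y) : y = 1 := by
  unfold IsPMStep at h; omega

lemma NQ_le {n k : ℕ} {f : ℕ → ℕ} (hf : NQ n k f) (i : ℕ) : f i ≤ k := by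
  rcases le_or_gt i n with hi | hi
  · calc f i ≤ ∑ j ∈ range (n + 1), f j :=
        Finset.single_le_sum (fun j _ => Nat.zero_le _) (mem_range.mpr (by omega))
    _ = k := hf.2.2.2
  · rw [hf.2.2.1 i hi]; exact Nat.zero_le _

instance nqFinite (n k : ℕ) : Finite {f : ℕ → ℕ // NQ n k f} := by
  have hinj : Function.Injective
      (fun s : {f : ℕ → ℕ // NQ n k f} =>
        (fun i : Fin (n + 1) => (⟨s.1 i, Nat.lt_succ_of_le (NQ_le s.2 i)⟩ : Fin (k + 1)))) := by
    intro s t hst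
    apply Subtype.ext; funext i
    rcases le_or_gt i n with hi | hi
    · have := congrFun hst ⟨i, by omega⟩
      exact congrArg Fin.val this
    · rw [s.2.2.2.1 i hi, t.2.2.2.1 i hi]
  exact Finite.of_injective _ hinj

instance nmFinite (n k : ℕ) : Finite {f : ℕ → ℕ // NM n k f} :=
  Finite.of_injective (fun s => (⟨s.1, s.2.1⟩ : {f : ℕ → ℕ // NQ n k f}))
    (fun a b h => Subtype.ext (by simpa [Subtype.ext_iff] using h))

/-- last visit of height `0` within `[0, n]`. -/
def lastZero (n : ℕ) (f : ℕ → ℕ) : ℕ := Nat.findGreatest (fun i => f i = 0) n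

lemma lastZero_eq_iff {n a : ℕ} {f : ℕ → ℕ} :
    lastZero n f = a ↔ a ≤ n ∧ (a ≠ 0 → f a = 0) ∧ ∀ i, a < i → i ≤ n → f i ≠ 0 := by
  rw [lastZero, Nat.findGreatest_eq_iff]

def cutG (a : ℕ) (f : ℕ → ℕ) : ℕ → ℕ := fun i => if i ≤ a then f i else 0
def cutQ (a m : ℕ) (f : ℕ → ℕ) : ℕ → ℕ := fun j => if j ≤ m then f (a + 1 + j) - 1 else 0
def glue (a m : ℕ) (g q : ℕ → ℕ) : ℕ → ℕ :=
  fun i => if i ≤ a then g i else if i ≤ a + 1 + m then q (i - (a + 1)) + 1 else 0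

lemma sum_split (a m : ℕ) (f : ℕ → ℕ) :
    ∑ i ∈ range (a + 1 + m + 1), f i
      = (∑ i ∈ range (a + 1), f i) + ∑ j ∈ range (m + 1), f (a + 1 + j) := by
  have h : a + 1 + m + 1 = (a + 1) + (m + 1) := by omega
  rw [h, Finset.sum_range_add]

lemma split_facts {n k a m : ℕ} {f : ℕ → ℕ} (hf : NQ n k f) (hm : n = a + 1 + m)
    (hlz : lastZero n f = a) :
    NM a (∑ i ∈ range (a + 1), f i) (cutG a f)
    ∧ NQ m (k - (∑ i ∈ range (a + 1), f i) - (m + 1)) (cutQ a m f)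
    ∧ (∑ i ∈ range (a + 1), f i) + (m + 1) ≤ k := by
  obtain ⟨hstep, h0, hbeyond, hsum⟩ := hf
  obtain ⟨han, hane, hgt⟩ := lastZero_eq_iff.mp hlz
  have hposf : ∀ i, a < i → i ≤ n → 0 < f i := fun i h1 h2 =>
    Nat.pos_of_ne_zero (hgt i h1 h2)
  have hfa : f a = 0 := by
    rcases Nat.eq_zero_or_pos a with rfl | hpos
    · exact h0
    · exact hane (by omega)
  have hfa1 : f (a + 1) = 1 := by
    have := hstep a (by omega)
    rw [hfa] at this
    exact step_from_zero this
  set K1 := ∑ i ∈ range (a + 1), f i with hK1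
  have hsum2 : K1 + ∑ j ∈ range (m + 1), f (a + 1 + j) = k := by
    rw [← sum_split a m f, ← hsum, hm]
  have hq_sum : ∑ j ∈ range (m + 1), f (a + 1 + j)
      = (∑ j ∈ range (m + 1), cutQ a m f j) + (m + 1) := by
    have : ∀ j ∈ range (m + 1), f (a + 1 + j) = cutQ a m f j + 1 := by
      intro j hj
      rw [mem_range] at hj
      have hj' : j ≤ m := by omega
      have hpos : 0 < f (a + 1 + j) := hposf _ (by omega) (by omega)
      simp only [cutQ, if_pos hj']
      omega
    rw [Finset.sum_congr rfl this, Finset.sum_add_distrib, Finset.sum_const, card_range,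
      smul_eq_mul, mul_one]
  have hQtot : ∑ j ∈ range (m + 1), cutQ a m f j = k - K1 - (m + 1) := by omega
  have hle : K1 + (m + 1) ≤ k := by omega
  refine ⟨⟨⟨?_, ?_, ?_, ?_⟩, ?_⟩, ⟨?_, ?_, ?_, hQtot⟩, hle⟩
  · intro i hi
    simp only [cutG, if_pos (by omega : i ≤ a), if_pos (by omega : i + 1 ≤ a)]
    exact hstep i (by omega)
  · simp only [cutG, if_pos (Nat.zero_le a)]; exact h0
  · intro i hi; simp only [cutG, if_neg (by omega : ¬ i ≤ a)]
  · exact Finset.sum_congr rfl fun i hi => by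
      rw [mem_range] at hi
      simp only [cutG, if_pos (by omega : i ≤ a)]
  · simp only [cutG, if_pos (le_refl a)]; exact hfa
  · intro j hj
    simp only [cutQ, if_pos (by omega : j ≤ m), if_pos (by omega : j + 1 ≤ m)]
    have h1 : 0 < f (a + 1 + j) := hposf _ (by omega) (by omega)
    have h2 : 0 < f (a + 1 + (j + 1)) := hposf _ (by omega) (by omega)
    exact step_sub_one h1 h2 (hstep (a + 1 + j) (by omega))
  · simp only [cutQ, if_pos (Nat.zero_le m)]
    rw [show a + 1 + 0 = a + 1 by omega, hfa1]
  · intro j hj; simp only [cutQ, if_neg (by omega : ¬ j ≤ m)]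

lemma glue_facts {a m k1 k2 : ℕ} {g q : ℕ → ℕ} (hg : NM a k1 g) (hq : NQ m k2 q) :
    NQ (a + 1 + m) (k1 + (k2 + (m + 1))) (glue a m g q)
    ∧ lastZero (a + 1 + m) (glue a m g q) = a
    ∧ ∑ i ∈ range (a + 1), glue a m g q i = k1 := by
  obtain ⟨⟨hgstep, hg0, hgbeyond, hgsum⟩, hga⟩ := hg
  obtain ⟨hqstep, hq0, hqbeyond, hqsum⟩ := hq
  have hg_at : ∀ i, i ≤ a → glue a m g q i = g i := fun i hi => by
    simp only [glue, if_pos hi]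
  have hq_at : ∀ i, a < i → i ≤ a + 1 + m → glue a m g q i = q (i - (a + 1)) + 1 := by
    intro i h1 h2
    simp only [glue, if_neg (by omega : ¬ i ≤ a), if_pos h2]
  have hsum1 : ∑ i ∈ range (a + 1), glue a m g q i = k1 := by
    rw [Finset.sum_congr rfl fun i hi => hg_at i (by rw [mem_range] at hi; omega)]
    exact hgsum
  refine ⟨⟨?_, ?_, ?_, ?_⟩, ?_, hsum1⟩
  · intro i hi
    rcases lt_trichotomy i a with h | rfl | h
    · rw [hg_at i (by omega), hg_at (i + 1) (by omega)]
      exact hgstep i h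
    · rw [hg_at i (le_refl _), hq_at (i + 1) (by omega) (by omega), hga]
      rw [show i + 1 - (i + 1) = 0 by omega, hq0]
      left; rfl
    · rw [hq_at i (by omega) (by omega), hq_at (i + 1) (by omega) (by omega)]
      rw [show i + 1 - (a + 1) = (i - (a + 1)) + 1 by omega]
      exact step_add_one (hqstep (i - (a + 1)) (by omega))
  · rw [hg_at 0 (Nat.zero_le a)]; exact hg0
  · intro i hi
    simp only [glue, if_neg (by omega : ¬ i ≤ a), if_neg (by omega : ¬ i ≤ a + 1 + m)]
  · rw [sum_split, hsum1]
    have : ∀ j ∈ range (m + 1), glue a m g q (a + 1 + j) = q j + 1 := by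
      intro j hj
      rw [mem_range] at hj
      rw [hq_at (a + 1 + j) (by omega) (by omega), show a + 1 + j - (a + 1) = j by omega]
    rw [Finset.sum_congr rfl this, Finset.sum_add_distrib, Finset.sum_const, card_range,
      smul_eq_mul, mul_one, hqsum]
  · rw [lastZero_eq_iff]
    refine ⟨by omega, fun _ => by rw [hg_at a (le_refl a)]; exact hga, ?_⟩
    intro i h1 h2
    rw [hq_at i h1 h2]
    omega

end QfeAux

namespace QfeAux
open Finset

lemma nat_card_sigma {ι : Type*} [Fintype ι] (β : ι → Type*) [∀ i, Finite (β i)] :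
    Nat.card (Σ i, β i) = ∑ i, Nat.card (β i) := by
  letI : ∀ i, Fintype (β i) := fun i => Fintype.ofFinite _
  simp [Nat.card_eq_fintype_card]

lemma fiber_card_lt (n k a k1 : ℕ) (ha : a < n) :
    Nat.card {s : {f : ℕ → ℕ // NQ n k f} //
        lastZero n s.1 = a ∧ ∑ i ∈ range (a + 1), s.1 i = k1}
      = if k1 + (n - a) ≤ k then mc a k1 * qc (n - a - 1) (k - k1 - (n - a)) else 0 := by
  obtain ⟨m, hnm⟩ : ∃ m, n = a + 1 + m := ⟨n - a - 1, by omega⟩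
  have hna : n - a = m + 1 := by omega
  rw [show n - a - 1 = m from by omega]
  split_ifs with hcond
  · rw [mc, qc, ← Nat.card_prod]
    apply Nat.card_congr
    refine ⟨fun s => (⟨cutG a s.1.1, ?_⟩, ⟨cutQ a m s.1.1, ?_⟩),
            fun p => ⟨⟨glue a m p.1.1 p.2.1, ?_⟩, ?_, ?_⟩, ?_, ?_⟩
    · obtain ⟨h1, h2, h3⟩ := split_facts s.1.2 hnm s.2.1
      rw [s.2.2] at h1
      exact h1
    · obtain ⟨h1, h2, h3⟩ := split_facts s.1.2 hnm s.2.1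
      rw [s.2.2] at h2
      rw [hna]
      exact h2
    · obtain ⟨⟨g, hg⟩, ⟨q, hq⟩⟩ := p
      obtain ⟨h1, h2, h3⟩ := glue_facts hg hq
      have hk : k1 + (k - k1 - (n - a) + (m + 1)) = k := by omega
      rw [hk, ← hnm] at h1
      exact h1
    · obtain ⟨⟨g, hg⟩, ⟨q, hq⟩⟩ := p
      show lastZero n (glue a m g q) = a
      rw [hnm]
      exact (glue_facts hg hq).2.1
    · obtain ⟨⟨g, hg⟩, ⟨q, hq⟩⟩ := p
      exact (glue_facts hg hq).2.2
    · intro s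
      obtain ⟨han, hane, hgt⟩ := lastZero_eq_iff.mp s.2.1
      have hposf : ∀ i, a < i → i ≤ n → 0 < s.1.1 i := fun i u v =>
        Nat.pos_of_ne_zero (hgt i u v)
      apply Subtype.ext
      apply Subtype.ext
      funext i
      show glue a m (cutG a s.1.1) (cutQ a m s.1.1) i = s.1.1 i
      rcases le_or_gt i a with hi | hi
      · simp only [glue, cutG, if_pos hi]
      · rcases le_or_gt i n with hi2 | hi2
        · simp only [glue, cutQ, if_neg (by omega : ¬ i ≤ a),
            if_pos (by omega : i ≤ a + 1 + m), if_pos (by omega : i - (a + 1) ≤ m)]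
          rw [show a + 1 + (i - (a + 1)) = i by omega]
          have := hposf i hi hi2
          omega
        · simp only [glue, if_neg (by omega : ¬ i ≤ a),
            if_neg (by omega : ¬ i ≤ a + 1 + m)]
          exact (s.1.2.2.2.1 i hi2).symm
    · intro p
      apply Prod.ext
      · apply Subtype.ext
        funext i
        show cutG a (glue a m p.1.1 p.2.1) i = p.1.1 i
        rcases le_or_gt i a with hi | hi
        · simp only [cutG, glue, if_pos hi]
        · simp only [cutG, if_neg (by omega : ¬ i ≤ a)]
          exact (p.1.2.1.2.2.1 i hi).symm
      · apply Subtype.ext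
        funext j
        show cutQ a m (glue a m p.1.1 p.2.1) j = p.2.1 j
        rcases le_or_gt j m with hj | hj
        · simp only [cutQ, glue, if_pos hj, if_neg (by omega : ¬ a + 1 + j ≤ a),
            if_pos (by omega : a + 1 + j ≤ a + 1 + m)]
          rw [show a + 1 + j - (a + 1) = j by omega]
          omega
        · simp only [cutQ, if_neg (by omega : ¬ j ≤ m)]
          exact (p.2.2.2.2.1 j hj).symm
  · have : IsEmpty {s : {f : ℕ → ℕ // NQ n k f} //
        lastZero n s.1 = a ∧ ∑ i ∈ range (a + 1), s.1 i = k1} := by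
      constructor
      rintro ⟨⟨f, hf⟩, hlz, hps⟩
      obtain ⟨h1, h2, h3⟩ := split_facts hf hnm hlz
      rw [hps] at h3
      omega
    exact Nat.card_of_isEmpty

lemma fiber_card_last (n k k1 : ℕ) :
    Nat.card {s : {f : ℕ → ℕ // NQ n k f} //
        lastZero n s.1 = n ∧ ∑ i ∈ range (n + 1), s.1 i = k1}
      = if k1 = k then mc n k else 0 := by
  split_ifs with h
  · subst h
    rw [mc]
    apply Nat.card_congr
    refine ⟨fun s => ⟨s.1.1, s.1.2, ?_⟩, fun t => ⟨⟨t.1, t.2.1⟩, ?_, t.2.1.2.2.2⟩,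
      fun s => rfl, fun t => rfl⟩
    · obtain ⟨han, hane, hgt⟩ := lastZero_eq_iff.mp s.2.1
      rcases Nat.eq_zero_or_pos n with hn | hn
      · subst hn; exact s.1.2.2.1
      · exact hane (by omega)
    · rw [lastZero_eq_iff]
      exact ⟨le_refl n, fun _ => t.2.2, fun i u v => absurd v (by omega)⟩
  · have : IsEmpty {s : {f : ℕ → ℕ // NQ n k f} //
        lastZero n s.1 = n ∧ ∑ i ∈ range (n + 1), s.1 i = k1} := by
      constructor
      rintro ⟨⟨f, hf⟩, hlz, hps⟩
      rw [hf.2.2.2] at hps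
      exact h hps.symm
    exact Nat.card_of_isEmpty

/-- The key counting identity. -/
lemma key (n k : ℕ) :
    qc n k = mc n k + ∑ a ∈ range n, ∑ k1 ∈ range (k + 1),
      (if k1 + (n - a) ≤ k then mc a k1 * qc (n - a - 1) (k - k1 - (n - a)) else 0) := by
  classical
  set T := {f : ℕ → ℕ // NQ n k f}
  have hps_lt : ∀ s : T, ∑ i ∈ range (lastZero n s.1 + 1), s.1 i < k + 1 := by
    intro s
    have h1 : lastZero n s.1 ≤ n := (lastZero_eq_iff.mp rfl).1
    have : ∑ i ∈ range (lastZero n s.1 + 1), s.1 i ≤ ∑ i ∈ range (n + 1), s.1 i :=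
      Finset.sum_le_sum_of_subset (by
        apply Finset.range_subset_range.mpr; omega)
    rw [s.2.2.2.2] at this
    omega
  set P : T → Fin (n + 1) × Fin (k + 1) := fun s =>
    (⟨lastZero n s.1, Nat.lt_succ_of_le (lastZero_eq_iff.mp rfl).1⟩,
     ⟨∑ i ∈ range (lastZero n s.1 + 1), s.1 i, hps_lt s⟩) with hP
  have hcardT : qc n k = ∑ p : Fin (n + 1) × Fin (k + 1), Nat.card {s : T // P s = p} := by
    rw [qc, Nat.card_congr (Equiv.sigmaFiberEquiv P).symm, nat_card_sigma]
  -- identify each fiber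
  have hfiber : ∀ a : Fin (n + 1), ∀ k1 : Fin (k + 1),
      Nat.card {s : T // P s = (a, k1)}
        = if (a : ℕ) = n then (if (k1 : ℕ) = k then mc n k else 0)
          else (if (k1 : ℕ) + (n - a) ≤ k then
            mc a k1 * qc (n - a - 1) (k - k1 - (n - a)) else 0) := by
    intro a k1
    have hre : ∀ s : T, (P s = (a, k1)) ↔
        (lastZero n s.1 = (a : ℕ) ∧ ∑ i ∈ range ((a : ℕ) + 1), s.1 i = (k1 : ℕ)) := by
      intro s
      rw [hP, Prod.ext_iff]
      simp only [Fin.ext_iff]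
      constructor
      · rintro ⟨h1, h2⟩
        refine ⟨h1, ?_⟩
        rw [← h1]
        exact h2
      · rintro ⟨h1, h2⟩
        refine ⟨h1, ?_⟩
        rw [h1]
        exact h2
    rw [Nat.card_congr (Equiv.subtypeEquivRight hre)]
    rcases eq_or_lt_of_le (Nat.lt_succ_iff.mp a.isLt) with hlast | hlt
    · rw [if_pos hlast, hlast]
      exact fiber_card_last n k k1
    · rw [if_neg (by omega)]
      exact fiber_card_lt n k a k1 hlt
  rw [hcardT, Fintype.sum_prod_type]
  have hrw : ∀ a : Fin (n + 1),
      ∑ k1 : Fin (k + 1), Nat.card {s : T // P s = (a, k1)}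
        = ∑ k1 ∈ range (k + 1),
            (if (a : ℕ) = n then (if k1 = k then mc n k else 0)
             else (if k1 + (n - a) ≤ k then
               mc a k1 * qc (n - a - 1) (k - k1 - (n - a)) else 0)) := by
    intro a
    rw [← Fin.sum_univ_eq_sum_range (fun k1 =>
      (if (a : ℕ) = n then (if k1 = k then mc n k else 0)
       else (if k1 + (n - a) ≤ k then
         mc a k1 * qc (n - a - 1) (k - k1 - (n - a)) else 0))) (k + 1)]
    exact Finset.sum_congr rfl fun k1 _ => hfiber a k1
  rw [Finset.sum_congr rfl fun a _ => hrw a]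
  rw [Fin.sum_univ_eq_sum_range (fun a =>
    ∑ k1 ∈ range (k + 1),
      (if a = n then (if k1 = k then mc n k else 0)
       else (if k1 + (n - a) ≤ k then
         mc a k1 * qc (n - a - 1) (k - k1 - (n - a)) else 0))) (n + 1),
    Finset.sum_range_succ]
  have hlastterm : (∑ k1 ∈ range (k + 1),
      (if n = n then (if k1 = k then mc n k else 0)
       else (if k1 + (n - n) ≤ k then
         mc n k1 * qc (n - n - 1) (k - k1 - (n - n)) else 0))) = mc n k := by
    simp only [eq_self_iff_true, if_true]
    rw [Finset.sum_ite_eq' (range (k + 1)) k (fun _ => mc n k),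
      if_pos (Finset.self_mem_range_succ k)]
  have hmain : ∀ a ∈ range n,
      (∑ k1 ∈ range (k + 1),
        (if a = n then (if k1 = k then mc n k else 0)
         else (if k1 + (n - a) ≤ k then
           mc a k1 * qc (n - a - 1) (k - k1 - (n - a)) else 0)))
      = ∑ k1 ∈ range (k + 1),
          (if k1 + (n - a) ≤ k then
            mc a k1 * qc (n - a - 1) (k - k1 - (n - a)) else 0) := by
    intro a ha
    rw [mem_range] at ha
    exact Finset.sum_congr rfl fun k1 _ => by rw [if_neg (by omega)]
  rw [Finset.sum_congr rfl hmain, hlastterm, Nat.add_comm]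

end QfeAux

namespace QfeAux
open Finset

/-! ### Transfer between `Fin`-indexed walks and `ℕ`-indexed walks -/

def extFun (n : ℕ) (h : Fin (n + 1) → ℕ) : ℕ → ℕ :=
  fun i => if hi : i < n + 1 then h ⟨i, hi⟩ else 0

lemma extFun_lt (n : ℕ) (h : Fin (n + 1) → ℕ) {i : ℕ} (hi : i < n + 1) :
    extFun n h i = h ⟨i, hi⟩ := dif_pos hi

lemma extFun_ge (n : ℕ) (h : Fin (n + 1) → ℕ) {i : ℕ} (hi : n < i) :
    extFun n h i = 0 := dif_neg (by omega)

lemma pmWalk_iff (n : ℕ) (h : Fin (n + 1) → ℕ) :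
    IsPMWalk n h ↔ ∀ i < n, IsPMStep (extFun n h i) (extFun n h (i + 1)) := by
  constructor
  · intro hw i hi
    rw [extFun_lt n h (by omega), extFun_lt n h (by omega)]
    have := hw ⟨i, hi⟩
    have e1 : (⟨i, hi⟩ : Fin n).castSucc = ⟨i, by omega⟩ := rfl
    have e2 : (⟨i, hi⟩ : Fin n).succ = ⟨i + 1, by omega⟩ := rfl
    rw [e1, e2] at this
    exact this
  · intro hw i
    have := hw i.1 i.isLt
    rw [extFun_lt n h (by omega), extFun_lt n h (by omega)] at this
    exact this

lemma totalHeight_eq (n : ℕ) (h : Fin (n + 1) → ℕ) :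
    totalHeight n h = ∑ i ∈ range (n + 1), extFun n h i := by
  rw [totalHeight, ← Fin.sum_univ_eq_sum_range (fun i => extFun n h i) (n + 1)]
  exact Finset.sum_congr rfl fun i _ => (extFun_lt n h i.isLt).symm

lemma zero_eq (n : ℕ) (h : Fin (n + 1) → ℕ) : extFun n h 0 = h 0 := by
  rw [extFun_lt n h (Nat.succ_pos n)]
  congr 1

lemma last_eq (n : ℕ) (h : Fin (n + 1) → ℕ) : extFun n h n = h (Fin.last n) := by
  rw [extFun_lt n h (Nat.lt_succ_self n)]
  rfl

noncomputable def qEquiv (n k : ℕ) :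
    {h : Fin (n + 1) → ℕ // IsQWalk n h ∧ totalHeight n h = k} ≃ {f : ℕ → ℕ // NQ n k f} where
  toFun s := ⟨extFun n s.1, by
    obtain ⟨⟨hw, h0⟩, hht⟩ := s.2
    refine ⟨(pmWalk_iff n s.1).1 hw, ?_, fun i hi => extFun_ge n s.1 hi, ?_⟩
    · rw [zero_eq]; exact h0
    · rw [← totalHeight_eq]; exact hht⟩
  invFun s := ⟨fun i => s.1 i.1, by
    obtain ⟨hstep, h0, hbeyond, hsum⟩ := s.2
    refine ⟨⟨?_, ?_⟩, ?_⟩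
    · intro i
      have := hstep i.1 i.isLt
      exact this
    · exact h0
    · rw [totalHeight, Fin.sum_univ_eq_sum_range (fun i => s.1 i) (n + 1)]
      exact hsum⟩
  left_inv s := by
    apply Subtype.ext
    funext i
    show extFun n s.1 i.1 = s.1 i
    rw [extFun_lt n s.1 i.isLt]
  right_inv s := by
    apply Subtype.ext
    funext i
    rcases lt_or_ge i (n + 1) with hi | hi
    · show extFun n _ i = s.1 i
      rw [extFun_lt n _ hi]
    · show extFun n _ i = s.1 i
      rw [extFun_ge n _ (by omega), s.2.2.2.1 i (by omega)]

noncomputable def mEquiv (n k : ℕ) :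
    {h : Fin (n + 1) → ℕ // IsMWalk n h ∧ totalHeight n h = k} ≃ {f : ℕ → ℕ // NM n k f} where
  toFun s := ⟨extFun n s.1, by
    obtain ⟨⟨hw, h0, hl⟩, hht⟩ := s.2
    refine ⟨⟨(pmWalk_iff n s.1).1 hw, ?_, fun i hi => extFun_ge n s.1 hi, ?_⟩, ?_⟩
    · rw [zero_eq]; exact h0
    · rw [← totalHeight_eq]; exact hht
    · rw [last_eq]; exact hl⟩
  invFun s := ⟨fun i => s.1 i.1, by
    obtain ⟨⟨hstep, h0, hbeyond, hsum⟩, hl⟩ := s.2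
    refine ⟨⟨?_, h0, ?_⟩, ?_⟩
    · intro i
      exact hstep i.1 i.isLt
    · exact hl
    · rw [totalHeight, Fin.sum_univ_eq_sum_range (fun i => s.1 i) (n + 1)]
      exact hsum⟩
  left_inv s := by
    apply Subtype.ext
    funext i
    show extFun n s.1 i.1 = s.1 i
    rw [extFun_lt n s.1 i.isLt]
  right_inv s := by
    apply Subtype.ext
    funext i
    rcases lt_or_ge i (n + 1) with hi | hi
    · show extFun n _ i = s.1 i
      rw [extFun_lt n _ hi]
    · show extFun n _ i = s.1 i
      rw [extFun_ge n _ (by omega), s.2.1.2.2.1 i (by omega)]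

lemma qc_eq (n k : ℕ) :
    Nat.card {h : Fin (n + 1) → ℕ // IsQWalk n h ∧ totalHeight n h = k} = qc n k :=
  Nat.card_congr (qEquiv n k)

lemma mc_eq (n k : ℕ) :
    Nat.card {h : Fin (n + 1) → ℕ // IsMWalk n h ∧ totalHeight n h = k} = mc n k :=
  Nat.card_congr (mEquiv n k)

/-! ### Final sum algebra over `ℤ` -/

lemma inner_sum_eq (b k : ℕ) (F : ℕ → ℕ → ℤ) :
    (∑ k1 ∈ range (k + 1), (if k1 + b ≤ k then F k1 (k - k1 - b) else 0))
      = if b ≤ k then ∑ k1 ∈ range (k - b + 1), F k1 (k - b - k1) else 0 := by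
  split_ifs with hb
  · rw [← Finset.sum_subset (Finset.range_subset_range.mpr (by omega : k - b + 1 ≤ k + 1))
      (fun x hx hnx => ?_)]
    · refine Finset.sum_congr rfl fun k1 hk1 => ?_
      rw [mem_range] at hk1
      rw [if_pos (by omega), show k - k1 - b = k - b - k1 by omega]
    · rw [mem_range] at hx hnx
      rw [if_neg (by omega)]
  · refine Finset.sum_eq_zero fun k1 _ => if_neg (by omega)

lemma final (n k : ℕ) :
    (qc n k : ℤ) = (mc n k : ℤ) + ∑ a ∈ range (n + 1),
      (if n - a = 0 then 0
       else if n - a ≤ k then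
         ∑ k1 ∈ range (k - (n - a) + 1),
           (mc a k1 : ℤ) * (qc (n - a - 1) (k - (n - a) - k1) : ℤ)
       else 0) := by
  rw [Finset.sum_range_succ, if_pos (by omega : n - n = 0), add_zero]
  have hterm : ∀ a ∈ range n,
      (if n - a = 0 then (0 : ℤ)
       else if n - a ≤ k then
         ∑ k1 ∈ range (k - (n - a) + 1),
           (mc a k1 : ℤ) * (qc (n - a - 1) (k - (n - a) - k1) : ℤ)
       else 0)
      = ∑ k1 ∈ range (k + 1),
          (if k1 + (n - a) ≤ k then (mc a k1 : ℤ) * (qc (n - a - 1) (k - k1 - (n - a)) : ℤ)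
           else 0) := by
    intro a ha
    rw [mem_range] at ha
    rw [if_neg (by omega), inner_sum_eq (n - a) k
      (fun k1 k2 => (mc a k1 : ℤ) * (qc (n - a - 1) k2 : ℤ))]
  rw [Finset.sum_congr rfl hterm, key n k]
  push_cast
  ring

end QfeAux


namespace QfeAux
open Finset PowerSeries

lemma coeff_Qser (n k : ℕ) :
    (PowerSeries.coeff k) ((PowerSeries.coeff n) Qser) = (qc n k : ℤ) := by
  rw [Qser, walkSeries, PowerSeries.coeff_mk, PowerSeries.coeff_mk, qc_eq]

lemma coeff_Mser (n k : ℕ) :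
    (PowerSeries.coeff k) ((PowerSeries.coeff n) Mser) = (mc n k : ℤ) := by
  rw [Mser, walkSeries, PowerSeries.coeff_mk, PowerSeries.coeff_mk, mc_eq]

lemma coeff_W_zero :
    (PowerSeries.coeff 0) (xVar * tVar * substTx 1 Qser) = 0 := by
  rw [mul_assoc, xVar]
  exact PowerSeries.coeff_zero_X_mul _

lemma coeff_W_succ (b : ℕ) :
    (PowerSeries.coeff (b + 1)) (xVar * tVar * substTx 1 Qser)
      = PowerSeries.X ^ (b + 1) * (PowerSeries.coeff b) Qser := by
  rw [mul_assoc, xVar, PowerSeries.coeff_succ_X_mul, tVar, PowerSeries.coeff_C_mul,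
    substTx, pow_one, PowerSeries.coeff_rescale, ← mul_assoc, ← pow_succ']

lemma term_eq (n k a : ℕ) :
    (PowerSeries.coeff k) ((PowerSeries.coeff a) Mser *
        (PowerSeries.coeff (n - a)) (xVar * tVar * substTx 1 Qser))
      = (if n - a = 0 then 0
         else if n - a ≤ k then
           ∑ k1 ∈ range (k - (n - a) + 1),
             (mc a k1 : ℤ) * (qc (n - a - 1) (k - (n - a) - k1) : ℤ)
         else 0) := by
  rcases hb : n - a with _ | m
  · rw [coeff_W_zero, mul_zero, map_zero, if_pos rfl]
  · rw [hb] at *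
    rw [if_neg (by omega : ¬ (m + 1 = 0)), Nat.add_sub_cancel, coeff_W_succ m,
      show ((PowerSeries.coeff a) Mser) *
          (PowerSeries.X ^ (m + 1) * (PowerSeries.coeff m) Qser)
        = ((PowerSeries.coeff a) Mser *
            (PowerSeries.coeff m) Qser) * PowerSeries.X ^ (m + 1) from by ring,
      PowerSeries.coeff_mul_X_pow']
    split_ifs with hk
    · rw [PowerSeries.coeff_mul, Finset.Nat.sum_antidiagonal_eq_sum_range_succ_mk]
      exact Finset.sum_congr rfl fun k1 _ => by rw [coeff_Mser, coeff_Qser]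
    · rfl

end QfeAux

/-- The generating series of Dyck-path prefixes satisfies `Q(x) = M(x)·(1 + x·t·Q(tx))`,
where `Q(tx)` is the image of `Q(x)` under the ring endomorphism of `ℤ[[x,t]]` fixing `t`
and sending `x` to `tx`. -/
theorem Qser_functional_eq :
    Qser = Mser * (1 + xVar * tVar * substTx 1 Qser) := by
  apply PowerSeries.ext
  intro n
  apply PowerSeries.ext
  intro k
  rw [mul_add, mul_one, map_add, map_add, QfeAux.coeff_Qser, QfeAux.coeff_Mser,
    PowerSeries.coeff_mul, Finset.Nat.sum_antidiagonal_eq_sum_range_succ_mk, map_sum,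
    Finset.sum_congr rfl fun a _ => QfeAux.term_eq n k a]
  exact QfeAux.final n k
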